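/- arXiv:2602.18003 — 3 statements merged into one kernel-verified Lean document; each statement's English description precedes it below -/
import Mathlib

section
/- Let P be a finite stochastic matrix, r a reward vector, J = P_* r the gain, and V = (I - P + P_*)^{-1}(I - P_*) r the bias. Then the Bellman equations hold: P J = J and r + P V = J + V. -/
/-!
Let `S_H = H⁻¹ ∑_{i<H} P^i`, so `S_H → P_*`. As `H • S_H` are the partial sums of the powers,
`P^H / H = S_{H+1} - S_H + S_{H+1} / H → 0`, and the telescoping identities
`S_H (P - 1) = (P - 1) S_H = (P^H - 1) / H` give `P_* P = P P_* = P_*` in the limit.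
If `X P = X` then `X S_H = X` for all `H ≥ 1`, hence `X P_* = X`; in particular `P_*² = P_*`.
If `X (1 - P + P_*) = 0`, multiplying by `P_*` on the right gives `X P_* = 0`, hence `X P = X`
and `X = X P_* = 0`. So `1 - P + P_*` is right regular, hence invertible in finite dimension.
From `P_* (1 - P + P_*) = P_*` we get `P_* (1 - P + P_*)⁻¹ = P_*`, and writing
`1 - P = (1 - P + P_*) - P_*` yields `(1 - P) (1 - P + P_*)⁻¹ (1 - P_*) = 1 - P_*`,
which applied to `r` is the second Bellman equation.
-/

open Matrix Filter Finset

/-- A row-stochastic matrix: nonnegative entries and rows summing to 1. -/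
def IsStochastic {n : Type*} [Fintype n] (P : Matrix n n ℝ) : Prop :=
  (∀ i j, 0 ≤ P i j) ∧ ∀ i, ∑ j, P i j = 1

/-- `Pstar` is the Cesàro limit of the powers of `P`. -/
def CesaroLimit {n : Type*} [Fintype n] [DecidableEq n] (P Pstar : Matrix n n ℝ) : Prop :=
  Filter.Tendsto (fun H : ℕ => (H : ℝ)⁻¹ • ∑ i ∈ Finset.range H, P ^ i)
    Filter.atTop (nhds Pstar)

open Topology

section Cesaro

variable {A : Type*} [Ring A] [Algebra ℝ A]

noncomputable def cesaroMean (P : A) (H : ℕ) : A :=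
  (H : ℝ)⁻¹ • ∑ i ∈ range H, P ^ i

theorem natCast_smul_cesaroMean (P : A) (H : ℕ) :
    (H : ℝ) • cesaroMean P H = ∑ i ∈ range H, P ^ i := by
  rcases eq_or_ne H 0 with rfl | hH
  · simp
  · rw [cesaroMean, smul_smul, mul_inv_cancel₀ (Nat.cast_ne_zero.mpr hH), one_smul]

theorem cesaroMean_mul_sub_one (P : A) (H : ℕ) :
    cesaroMean P H * (P - 1) = (H : ℝ)⁻¹ • (P ^ H - 1) := by
  rw [cesaroMean, smul_mul_assoc, geom_sum_mul]

theorem sub_one_mul_cesaroMean (P : A) (H : ℕ) :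
    (P - 1) * cesaroMean P H = (H : ℝ)⁻¹ • (P ^ H - 1) := by
  rw [cesaroMean, mul_smul_comm, mul_geom_sum]

theorem mul_cesaroMean_of_mul_eq_self {P X : A} (h : X * P = X) {H : ℕ} (hH : H ≠ 0) :
    X * cesaroMean P H = X := by
  have hpow (i : ℕ) : X * P ^ i = X := by
    induction i with
    | zero => rw [pow_zero, mul_one]
    | succ i ih => rw [pow_succ, ← mul_assoc, ih, h]
  rw [cesaroMean, mul_smul_comm, mul_sum, sum_congr rfl fun i _ => hpow i, sum_const,
    card_range, ← Nat.cast_smul_eq_nsmul ℝ, smul_smul,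
    inv_mul_cancel₀ (Nat.cast_ne_zero.mpr hH), one_smul]

theorem inv_smul_pow_eq_cesaroMean (P : A) {H : ℕ} (hH : H ≠ 0) :
    (H : ℝ)⁻¹ • P ^ H =
      cesaroMean P (H + 1) - cesaroMean P H + (H : ℝ)⁻¹ • cesaroMean P (H + 1) := by
  have hH' : (H : ℝ) ≠ 0 := Nat.cast_ne_zero.mpr hH
  have hpow : P ^ H = ((H + 1 : ℕ) : ℝ) • cesaroMean P (H + 1) - (H : ℝ) • cesaroMean P H := by
    rw [natCast_smul_cesaroMean, natCast_smul_cesaroMean, sum_range_succ, add_sub_cancel_left]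
  rw [hpow, smul_sub, smul_smul, smul_smul, inv_mul_cancel₀ hH', one_smul, Nat.cast_succ,
    mul_add, inv_mul_cancel₀ hH', mul_one, add_smul, one_smul]
  abel

variable [TopologicalSpace A]

def IsCesaroLimit (P L : A) : Prop :=
  Tendsto (cesaroMean P) atTop (𝓝 L)

namespace IsCesaroLimit

variable [IsTopologicalRing A] {P L : A}

theorem tendsto_inv_smul_pow [ContinuousSMul ℝ A] (h : IsCesaroLimit P L) :
    Tendsto (fun H : ℕ => (H : ℝ)⁻¹ • P ^ H) atTop (𝓝 0) := by
  have hshift : Tendsto (fun H => cesaroMean P (H + 1)) atTop (𝓝 L) :=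
    h.comp (tendsto_add_atTop_nat 1)
  have hlim := (hshift.sub h).add ((tendsto_inv_atTop_nhds_zero_nat (𝕜 := ℝ)).smul hshift)
  rw [sub_self, zero_add, zero_smul] at hlim
  refine hlim.congr' ?_
  filter_upwards [eventually_ne_atTop 0] with H hH
  exact (inv_smul_pow_eq_cesaroMean P hH).symm

theorem tendsto_inv_smul_pow_sub_one [ContinuousSMul ℝ A] (h : IsCesaroLimit P L) :
    Tendsto (fun H : ℕ => (H : ℝ)⁻¹ • (P ^ H - 1)) atTop (𝓝 0) := by
  simpa only [smul_sub, sub_zero, zero_smul] using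
    h.tendsto_inv_smul_pow.sub ((tendsto_inv_atTop_nhds_zero_nat (𝕜 := ℝ)).smul_const (1 : A))

variable [T2Space A]

theorem limit_mul [ContinuousSMul ℝ A] (h : IsCesaroLimit P L) : L * P = L := by
  have hmul : Tendsto (fun H => cesaroMean P H * (P - 1)) atTop (𝓝 (L * (P - 1))) :=
    ((continuous_mul_const (P - 1)).tendsto L).comp h
  have hL : L * (P - 1) = 0 := tendsto_nhds_unique hmul
    (by simpa only [cesaroMean_mul_sub_one] using h.tendsto_inv_smul_pow_sub_one)
  rwa [mul_sub, mul_one, sub_eq_zero] at hL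

theorem mul_limit [ContinuousSMul ℝ A] (h : IsCesaroLimit P L) : P * L = L := by
  have hmul : Tendsto (fun H => (P - 1) * cesaroMean P H) atTop (𝓝 ((P - 1) * L)) :=
    ((continuous_const_mul (P - 1)).tendsto L).comp h
  have hL : (P - 1) * L = 0 := tendsto_nhds_unique hmul
    (by simpa only [sub_one_mul_cesaroMean] using h.tendsto_inv_smul_pow_sub_one)
  rwa [sub_mul, one_mul, sub_eq_zero] at hL

theorem mul_limit_of_mul_eq_self (h : IsCesaroLimit P L) {X : A} (hX : X * P = X) :
    X * L = X := by
  have hmul : Tendsto (fun H => X * cesaroMean P H) atTop (𝓝 (X * L)) :=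
    ((continuous_const_mul X).tendsto L).comp h
  refine tendsto_nhds_unique hmul (tendsto_const_nhds.congr' ?_)
  filter_upwards [eventually_ne_atTop 0] with H hH
  exact (mul_cesaroMean_of_mul_eq_self hX hH).symm

theorem limit_mul_limit [ContinuousSMul ℝ A] (h : IsCesaroLimit P L) : L * L = L :=
  h.mul_limit_of_mul_eq_self h.limit_mul

theorem isRightRegular_one_sub_add [ContinuousSMul ℝ A] (h : IsCesaroLimit P L) :
    IsRightRegular (1 - P + L) := by
  refine isRightRegular_of_non_zero_divisor _ fun X hX => ?_
  have hAL : (1 - P + L) * L = L := by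
    rw [add_mul, sub_mul, one_mul, h.mul_limit, h.limit_mul_limit, sub_self, zero_add]
  have hXL : X * L = 0 := by rw [← hAL, ← mul_assoc, hX, zero_mul]
  have hXP : X * P = X := by
    rwa [mul_add, mul_sub, mul_one, hXL, add_zero, sub_eq_zero, eq_comm] at hX
  rw [← h.mul_limit_of_mul_eq_self hXP, hXL]

theorem isUnit_one_sub_add [ContinuousSMul ℝ A] [IsArtinianRing A] (h : IsCesaroLimit P L) :
    IsUnit (1 - P + L) :=
  IsArtinianRing.isUnit_iff_isRightRegular.mpr h.isRightRegular_one_sub_add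

end IsCesaroLimit

end Cesaro

theorem one_sub_mul_inverse_mul_one_sub {R : Type*} [Ring R] {P L : R} (hLP : L * P = L)
    (hLL : L * L = L) (hA : IsUnit (1 - P + L)) :
    (1 - P) * Ring.inverse (1 - P + L) * (1 - L) = 1 - L := by
  have hLA : L * Ring.inverse (1 - P + L) = L := by
    calc L * Ring.inverse (1 - P + L)
        = L * (1 - P + L) * Ring.inverse (1 - P + L) := by
          rw [mul_add, mul_sub, mul_one, hLP, hLL, sub_self, zero_add]
      _ = L := by rw [mul_assoc, Ring.mul_inverse_cancel _ hA, mul_one]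
  calc (1 - P) * Ring.inverse (1 - P + L) * (1 - L)
      = (1 - P + L) * Ring.inverse (1 - P + L) * (1 - L)
          - L * Ring.inverse (1 - P + L) * (1 - L) := by noncomm_ring
    _ = 1 - L := by
      rw [Ring.mul_inverse_cancel _ hA, hLA, one_mul, mul_sub, mul_one, hLL, sub_self, sub_zero]

theorem bellman_equations_general {n : Type*} [Fintype n] [DecidableEq n]
    (P Pstar : Matrix n n ℝ) (hC : CesaroLimit P Pstar)
    (r J V : n → ℝ)
    (hJ : J = Pstar *ᵥ r)
    (hV : V = (1 - P + Pstar)⁻¹ *ᵥ ((1 - Pstar) *ᵥ r)) :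
    P *ᵥ J = J ∧ r + P *ᵥ V = J + V := by
  have hL : IsCesaroLimit P Pstar := hC
  have hbias : (1 - P) * (1 - P + Pstar)⁻¹ * (1 - Pstar) = 1 - Pstar := by
    rw [nonsing_inv_eq_ringInverse]
    exact one_sub_mul_inverse_mul_one_sub hL.limit_mul hL.limit_mul_limit hL.isUnit_one_sub_add
  have hV' : (1 - P) *ᵥ V = r - J := by
    rw [hV, mulVec_mulVec, mulVec_mulVec, hbias, sub_mulVec, one_mulVec, hJ]
  rw [sub_mulVec, one_mulVec] at hV'
  refine ⟨by rw [hJ, mulVec_mulVec, hL.mul_limit], ?_⟩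
  linear_combination -hV'

theorem bellman_equations {n : Type*} [Fintype n] [DecidableEq n]
    (P Pstar : Matrix n n ℝ) (hP : IsStochastic P) (hC : CesaroLimit P Pstar)
    (r J V : n → ℝ)
    (hJ : J = Pstar *ᵥ r)
    (hV : V = (1 - P + Pstar)⁻¹ *ᵥ ((1 - Pstar) *ᵥ r)) :
    P *ᵥ J = J ∧ r + P *ᵥ V = J + V :=
  bellman_equations_general P Pstar hC r J V hJ hV
end

section
/- Truncated-horizon bias of the average reward estimate: Let P be stochastic with gain J = P_* r and bias V (so r + P V = J + V), and let K = P J. For the H-horizon average starting at (s,a): |E[(1/(H+1)) Σ_{i=0}^H r(s_i,a_i)] − K(s,a)| ≤ 2(‖V‖_∞ + ‖r‖_∞)/(H+1), where the expectation is under the chain with kernel P. -/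
/-!
The Cesàro limit `P⋆` of a matrix `P` absorbs `P` on both sides and is idempotent, so
`P⋆` kills the kernel of the fundamental matrix `1 - P + P⋆`, which is therefore invertible,
and `V = (1 - P + P⋆)⁻¹ (1 - P⋆) r` solves the Poisson equation `r + P V = J + V` with
`P J = J`, whence `K = J`. Writing `r = J + V - P V` makes the sum telescope:
`∑_{i ≤ H} Pⁱ r = (H + 1) J + V - P^{H+1} V`, and a stochastic matrix does not increase the
sup norm, so the error is at most `2 ‖V‖ / (H + 1)`.
-/

open Matrix Filter Finset

open scoped Topology

theorem Matrix.pow_mulVec_of_mulVec_eq {n R : Type*} [Fintype n] [DecidableEq n] [Semiring R]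
    {M : Matrix n n R} {x : n → R} (hx : M *ᵥ x = x) (k : ℕ) : M ^ k *ᵥ x = x := by
  induction k with
  | zero => rw [pow_zero, one_mulVec]
  | succ k ih => rw [pow_succ', ← mulVec_mulVec, ih, hx]

namespace CesaroLimit

variable {n : Type*} [Fintype n] [DecidableEq n] {P Pstar : Matrix n n ℝ}

theorem tendsto_inv_smul_pow (hC : CesaroLimit P Pstar) :
    Tendsto (fun H : ℕ => (H : ℝ)⁻¹ • P ^ H) atTop (𝓝 0) := by
  set A : ℕ → Matrix n n ℝ := fun H => (H : ℝ)⁻¹ • ∑ i ∈ range H, P ^ i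
  have hinv := tendsto_inv_atTop_nhds_zero_nat (𝕜 := ℝ)
  have hA : Tendsto (fun H => A (H + 1)) atTop (𝓝 Pstar) := hC.comp (tendsto_add_atTop_nat 1)
  have hlim := (hA.add (hinv.smul hA)).sub hC
  rw [zero_smul, add_zero, sub_self] at hlim
  -- `Pᴴ / H = (1 + 1/H) A (H + 1) - A H` for the Cesàro averages `A`
  refine hlim.congr' ?_
  filter_upwards [eventually_ne_atTop 0] with H hH
  have hcoef : ((H + 1 : ℕ) : ℝ)⁻¹ + (H : ℝ)⁻¹ * ((H + 1 : ℕ) : ℝ)⁻¹ =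
      (H : ℝ)⁻¹ := by
    field_simp
    push_cast
    ring
  simp only [A]
  rw [smul_smul, ← add_smul, hcoef, sum_range_succ, smul_add, add_sub_cancel_left]

theorem tendsto_inv_smul_pow_sub_one (hC : CesaroLimit P Pstar) :
    Tendsto (fun H : ℕ => (H : ℝ)⁻¹ • (P ^ H - 1)) atTop (𝓝 0) := by
  simpa only [smul_sub, zero_smul, sub_zero] using
    hC.tendsto_inv_smul_pow.sub
      ((tendsto_inv_atTop_nhds_zero_nat (𝕜 := ℝ)).smul_const (1 : Matrix n n ℝ))

theorem mul_limit (hC : CesaroLimit P Pstar) : P * Pstar = Pstar := by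
  have hlim : Tendsto (fun H : ℕ => (P - 1) * ((H : ℝ)⁻¹ • ∑ i ∈ range H, P ^ i)) atTop
      (𝓝 ((P - 1) * Pstar)) := hC.const_mul (P - 1)
  simp only [mul_smul_comm, mul_geom_sum] at hlim
  rw [← sub_eq_zero, ← sub_one_mul]
  exact tendsto_nhds_unique hlim hC.tendsto_inv_smul_pow_sub_one

theorem limit_mul (hC : CesaroLimit P Pstar) : Pstar * P = Pstar := by
  have hlim : Tendsto (fun H : ℕ => ((H : ℝ)⁻¹ • ∑ i ∈ range H, P ^ i) * (P - 1)) atTop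
      (𝓝 (Pstar * (P - 1))) := hC.mul_const (P - 1)
  simp only [smul_mul_assoc, geom_sum_mul] at hlim
  rw [← sub_eq_zero, ← mul_sub_one]
  exact tendsto_nhds_unique hlim hC.tendsto_inv_smul_pow_sub_one

theorem mulVec_eq_of_mulVec_eq (hC : CesaroLimit P Pstar) {x : n → ℝ} (hx : P *ᵥ x = x) :
    Pstar *ᵥ x = x := by
  have hlim : Tendsto (fun H : ℕ => ((H : ℝ)⁻¹ • ∑ i ∈ range H, P ^ i) *ᵥ x) atTop
      (𝓝 (Pstar *ᵥ x)) :=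
    ((continuous_id.matrix_mulVec continuous_const).tendsto Pstar).comp hC
  refine tendsto_nhds_unique hlim (tendsto_const_nhds.congr' ?_)
  filter_upwards [eventually_ne_atTop 0] with H hH
  rw [smul_mulVec, sum_mulVec]
  simp only [pow_mulVec_of_mulVec_eq hx, sum_const, card_range]
  rw [← Nat.cast_smul_eq_nsmul ℝ, inv_smul_smul₀ (Nat.cast_ne_zero.2 hH)]

theorem limit_mul_limit (hC : CesaroLimit P Pstar) : Pstar * Pstar = Pstar := by
  ext i j
  exact congrFun (hC.mulVec_eq_of_mulVec_eq (x := fun k => Pstar k j)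
    (funext fun k => congrFun (congrFun hC.mul_limit k) j)) i

theorem limit_mul_one_sub_add (hC : CesaroLimit P Pstar) : Pstar * (1 - P + Pstar) = Pstar := by
  rw [mul_add, mul_sub, mul_one, hC.limit_mul, hC.limit_mul_limit, sub_self, zero_add]

theorem isUnit_det_one_sub_add (hC : CesaroLimit P Pstar) : IsUnit (1 - P + Pstar).det := by
  rw [isUnit_iff_ne_zero, Ne, ← exists_mulVec_eq_zero_iff]
  rintro ⟨x, hx0, hx⟩
  have hPstar : Pstar *ᵥ x = 0 := by
    rw [← hC.limit_mul_one_sub_add, ← mulVec_mulVec, hx, mulVec_zero]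
  have hPx : P *ᵥ x = x := by
    rw [add_mulVec, sub_mulVec, one_mulVec, hPstar, add_zero, sub_eq_zero] at hx
    exact hx.symm
  exact hx0 ((hC.mulVec_eq_of_mulVec_eq hPx).symm.trans hPstar)

theorem mulVec_limit_mulVec (hC : CesaroLimit P Pstar) (r : n → ℝ) :
    P *ᵥ (Pstar *ᵥ r) = Pstar *ᵥ r := by
  rw [mulVec_mulVec, hC.mul_limit]

theorem poisson (hC : CesaroLimit P Pstar) {r V : n → ℝ}
    (hV : V = (1 - P + Pstar)⁻¹ *ᵥ ((1 - Pstar) *ᵥ r)) :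
    r + P *ᵥ V = Pstar *ᵥ r + V := by
  set M := 1 - P + Pstar
  have hMinv : M * M⁻¹ = 1 := mul_nonsing_inv M hC.isUnit_det_one_sub_add
  have hPstarMinv : Pstar * M⁻¹ = Pstar := by
    conv_lhs => rw [← hC.limit_mul_one_sub_add, mul_assoc, hMinv, mul_one]
  have hPstarV : Pstar *ᵥ V = 0 := by
    rw [hV, mulVec_mulVec, mulVec_mulVec, hPstarMinv, mul_sub, mul_one, hC.limit_mul_limit,
      sub_self, zero_mulVec]
  have hMV : M *ᵥ V = (1 - Pstar) *ᵥ r := by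
    rw [hV, mulVec_mulVec, hMinv, one_mulVec]
  simp only [M, add_mulVec, sub_mulVec, one_mulVec, hPstarV] at hMV
  linear_combination -hMV

end CesaroLimit

theorem Matrix.sum_range_pow_mulVec_of_poisson {n : Type*} [Fintype n] [DecidableEq n]
    {P : Matrix n n ℝ} {r J V : n → ℝ} (hpoisson : r + P *ᵥ V = J + V) (hJ : P *ᵥ J = J)
    (H : ℕ) : ∑ i ∈ range H, P ^ i *ᵥ r = H • J + (V - P ^ H *ᵥ V) := by
  have hr : r = J + (V - P *ᵥ V) := by linear_combination hpoisson
  have hterm (i : ℕ) : P ^ i *ᵥ r = J + (P ^ i *ᵥ V - P ^ (i + 1) *ᵥ V) := by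
    rw [hr, mulVec_add, mulVec_sub, pow_mulVec_of_mulVec_eq hJ, mulVec_mulVec, ← pow_succ]
  rw [sum_congr rfl fun i _ => hterm i, sum_add_distrib, sum_const, card_range,
    sum_range_sub' (fun i => P ^ i *ᵥ V), pow_zero, one_mulVec]

namespace IsStochastic

variable {n : Type*} [Fintype n] {P : Matrix n n ℝ}

theorem iff_mem_rowStochastic [DecidableEq n] : IsStochastic P ↔ P ∈ rowStochastic ℝ n :=
  mem_rowStochastic_iff_sum.symm

theorem pow [DecidableEq n] (hP : IsStochastic P) (k : ℕ) : IsStochastic (P ^ k) :=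
  iff_mem_rowStochastic.2 (pow_mem (iff_mem_rowStochastic.1 hP) k)

theorem norm_mulVec_le (hP : IsStochastic P) (v : n → ℝ) : ‖P *ᵥ v‖ ≤ ‖v‖ := by
  refine (pi_norm_le_iff_of_nonneg (norm_nonneg v)).2 fun s => ?_
  rw [Real.norm_eq_abs]
  calc |∑ j, P s j * v j| ≤ ∑ j, P s j * ‖v‖ := by
        refine (abs_sum_le_sum_abs _ _).trans (sum_le_sum fun j _ => ?_)
        rw [abs_mul, abs_of_nonneg (hP.1 s j)]
        exact mul_le_mul_of_nonneg_left (norm_le_pi_norm v j) (hP.1 s j)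
    _ = ‖v‖ := by rw [← sum_mul, hP.2 s, one_mul]

theorem abs_average_sub_le [DecidableEq n] (hP : IsStochastic P) {r J V : n → ℝ}
    (hpoisson : r + P *ᵥ V = J + V) (hJ : P *ᵥ J = J) (s : n) {H : ℕ} (hH : H ≠ 0) :
    |(H : ℝ)⁻¹ * ∑ i ∈ range H, (P ^ i *ᵥ r) s - J s| ≤ 2 * ‖V‖ / H := by
  have hsum := congrFun (sum_range_pow_mulVec_of_poisson hpoisson hJ H) s
  rw [Finset.sum_apply, Pi.add_apply, Pi.smul_apply, nsmul_eq_mul, Pi.sub_apply] at hsum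
  have hdiff : (H : ℝ)⁻¹ * ∑ i ∈ range H, (P ^ i *ᵥ r) s - J s =
      (V s - (P ^ H *ᵥ V) s) / H := by
    rw [hsum]
    field_simp
    ring
  have hV : |V s| ≤ ‖V‖ := norm_le_pi_norm V s
  have hPV : |(P ^ H *ᵥ V) s| ≤ ‖V‖ :=
    (norm_le_pi_norm _ s).trans ((hP.pow H).norm_mulVec_le V)
  rw [hdiff, abs_div, Nat.abs_cast]
  gcongr
  linarith [abs_sub (V s) ((P ^ H *ᵥ V) s)]

end IsStochastic

/-- Truncated-horizon bias of the average reward estimate: the expected `H`-horizon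
average of rewards starting from `s`, namely `(1/(H+1)) ∑_{i=0}^H (Pⁱ r)(s)`, is within
`2(‖V‖_∞ + ‖r‖_∞)/(H+1)` of `K = P J`. -/
theorem truncated_horizon_bias {n : Type*} [Fintype n] [DecidableEq n]
    (P Pstar : Matrix n n ℝ) (hP : IsStochastic P) (hC : CesaroLimit P Pstar)
    (r J V K : n → ℝ)
    (hJ : J = Pstar *ᵥ r)
    (hV : V = (1 - P + Pstar)⁻¹ *ᵥ ((1 - Pstar) *ᵥ r))
    (hK : K = P *ᵥ J) :
    ∀ (s : n) (H : ℕ),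
      |((H : ℝ) + 1)⁻¹ * ∑ i ∈ Finset.range (H + 1), (P ^ i *ᵥ r) s - K s| ≤
        2 * (‖V‖ + ‖r‖) / ((H : ℝ) + 1) := by
  intro s H
  have hpoisson : r + P *ᵥ V = J + V := hJ ▸ hC.poisson hV
  have hPJ : P *ᵥ J = J := hJ ▸ hC.mulVec_limit_mulVec r
  calc _ ≤ 2 * ‖V‖ / ((H : ℝ) + 1) := by
        simpa [hK, hPJ] using hP.abs_average_sub_le hpoisson hPJ s H.succ_ne_zero
    _ ≤ 2 * (‖V‖ + ‖r‖) / ((H : ℝ) + 1) := by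
        gcongr
        linarith [norm_nonneg r]
end

section
/- Monotone policy improvement implies nonnegative weighted advantage: Let ρ be a nonnegative weight vector over states, and for each state s let π_{k+1}(·|s) maximize p ↦ η G(s,·)·p − D(p, π_k(·|s)) over a convex set of distributions containing π_k(·|s), where D is a Bregman divergence. Then Σ_a G(s,a)(π_k(a|s) − π_{k+1}(a|s)) ≤ −(1/η)[D(π_{k+1}(·|s), π_k(·|s)) + D(π_k(·|s), π_{k+1}(·|s))] ≤ 0 for every s. -/
/-!
The objective `p ↦ η⟪g, p⟫ - D(p, q)` has gradient `η g - (∇h p - ∇h q)`, so first-order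
optimality of the maximiser `x` over the convex set `K`, tested in the direction of `q ∈ K`,
gives `η⟪g, q - x⟫ ≤ ⟪∇h x - ∇h q, q - x⟫`. By the three-point identity the right-hand side is
`-(D(x, q) + D(q, x))`, which is nonpositive because the Bregman divergence of a convex
function is nonnegative (the gradient inequality).
-/

open InnerProductSpace

section Bregman

variable {E : Type*} [NormedAddCommGroup E] [InnerProductSpace ℝ E] [CompleteSpace E]

theorem ConvexOn.inner_gradient_sub_le {f : E → ℝ} {s : Set E} (hf : ConvexOn ℝ s f) {x y : E}
    (hx : x ∈ s) (hy : y ∈ s) (hfx : DifferentiableAt ℝ f x) :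
    ⟪gradient f x, y - x⟫_ℝ ≤ f y - f x := by
  have hline : HasDerivAt (f ∘ AffineMap.lineMap (k := ℝ) x y) ⟪gradient f x, y - x⟫_ℝ 0 :=
    hfx.hasGradientAt.hasFDerivAt.comp_hasDerivAt_of_eq 0 AffineMap.hasDerivAt_lineMap
      (AffineMap.lineMap_apply_zero x y).symm
  have hconv := hf.comp_affineMap (AffineMap.lineMap (k := ℝ) x y)
  simpa [slope_def_field] using hconv.le_slope_of_hasDerivAt (by simpa) (by simpa) zero_lt_one hline

theorem IsMaxOn.inner_sub_nonpos_of_hasGradientAt {f : E → ℝ} {K : Set E} {x y g : E}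
    (hmax : IsMaxOn f K x) (hf : HasGradientAt f g x) (hK : Convex ℝ K) (hx : x ∈ K)
    (hy : y ∈ K) : ⟪g, y - x⟫_ℝ ≤ 0 := by
  simpa using hmax.localize.hasFDerivWithinAt_nonpos hf.hasFDerivAt.hasFDerivWithinAt
    (sub_mem_posTangentConeAt_of_segment_subset (hK.segment_subset hx hy))

noncomputable def bregmanDiv (h : E → ℝ) (p q : E) : ℝ := h p - h q - ⟪gradient h q, p - q⟫_ℝ

variable {h : E → ℝ}

theorem bregmanDiv_nonneg {s : Set E} (hh : ConvexOn ℝ s h) {p q : E} (hp : p ∈ s) (hq : q ∈ s)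
    (hhq : DifferentiableAt ℝ h q) : 0 ≤ bregmanDiv h p q :=
  sub_nonneg.2 (hh.inner_gradient_sub_le hq hp hhq)

theorem bregmanDiv_add_bregmanDiv (p q : E) :
    bregmanDiv h p q + bregmanDiv h q p = ⟪gradient h p - gradient h q, p - q⟫_ℝ := by
  simp only [bregmanDiv, inner_sub_left, inner_sub_right, real_inner_comm]
  ring

theorem hasGradientAt_bregmanDiv_left {x : E} (hx : DifferentiableAt ℝ h x) (q : E) :
    HasGradientAt (bregmanDiv h · q) (gradient h x - gradient h q) x := by
  rw [hasGradientAt_iff_hasFDerivAt]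
  have hlin : HasFDerivAt (fun p => ⟪gradient h q, p - q⟫_ℝ) (innerSL ℝ (gradient h q)) x :=
    (innerSL ℝ (gradient h q)).hasFDerivAt.comp x ((hasFDerivAt_id x).sub_const q)
  refine ((hx.hasGradientAt.hasFDerivAt.sub_const (h q)).sub hlin).congr_fderiv ?_
  ext v
  simp

theorem inner_sub_le_of_isMaxOn_sub_bregmanDiv {K : Set E} (hK : Convex ℝ K) {g q x : E}
    {η : ℝ} (hη : 0 < η) (hq : q ∈ K) (hx : x ∈ K) (hhx : DifferentiableAt ℝ h x)
    (hmax : IsMaxOn (fun p => η * ⟪g, p⟫_ℝ - bregmanDiv h p q) K x) :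
    ⟪g, q - x⟫_ℝ ≤ -(1 / η) * (bregmanDiv h x q + bregmanDiv h q x) := by
  have hgrad : HasGradientAt (fun p => η * ⟪g, p⟫_ℝ - bregmanDiv h p q)
      (η • g - (gradient h x - gradient h q)) x := by
    rw [hasGradientAt_iff_hasFDerivAt]
    refine (((innerSL ℝ g).hasFDerivAt.const_mul η).sub
      (hasGradientAt_bregmanDiv_left hhx q).hasFDerivAt).congr_fderiv ?_
    ext v
    simp
  have hopt := hmax.inner_sub_nonpos_of_hasGradientAt hgrad hK hx hq
  have hthree : ⟪gradient h x - gradient h q, q - x⟫_ℝ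
      = -(bregmanDiv h x q + bregmanDiv h q x) := by
    rw [bregmanDiv_add_bregmanDiv, ← inner_neg_right, neg_sub]
  rw [inner_sub_left, real_inner_smul_left, hthree] at hopt
  calc ⟪g, q - x⟫_ℝ = 1 / η * (η * ⟪g, q - x⟫_ℝ) := by field_simp
    _ ≤ 1 / η * -(bregmanDiv h x q + bregmanDiv h q x) := by gcongr; linarith
    _ = _ := by ring

end Bregman

theorem EuclideanSpace.sum_mul_eq_inner_toLp {ι : Type*} [Fintype ι] (w : ι → ℝ)
    (p : EuclideanSpace ℝ ι) : ∑ i, w i * p i = ⟪WithLp.toLp 2 w, p⟫_ℝ := by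
  simp [EuclideanSpace.inner_eq_star_dotProduct, dotProduct, mul_comm]

theorem mirror_ascent_improvement_general {S A : Type*} [Fintype A]
    (h : EuclideanSpace ℝ A → ℝ)
    (hconv : StrictConvexOn ℝ Set.univ h)
    (hdiff : Differentiable ℝ h)
    (D : EuclideanSpace ℝ A → EuclideanSpace ℝ A → ℝ)
    (hD : ∀ p q, D p q = h p - h q - (inner ℝ (gradient h q) (p - q) : ℝ))
    (K : Set (EuclideanSpace ℝ A)) (hK : Convex ℝ K)
    (G : S → A → ℝ) (η : ℝ) (hη : 0 < η)
    (πk πk1 : S → EuclideanSpace ℝ A)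
    (hπk : ∀ s, πk s ∈ K) (hπk1 : ∀ s, πk1 s ∈ K)
    (hmax : ∀ s, IsMaxOn (fun p => η * ∑ a, G s a * p a - D p (πk s)) K (πk1 s)) :
    ∀ s, ∑ a, G s a * (πk s a - πk1 s a) ≤
          -(1 / η) * (D (πk1 s) (πk s) + D (πk s) (πk1 s)) ∧
        -(1 / η) * (D (πk1 s) (πk s) + D (πk s) (πk1 s)) ≤ 0 := by
  obtain rfl : D = bregmanDiv h := funext₂ hD
  intro s
  have hstep : IsMaxOn (fun p => η * ⟪WithLp.toLp 2 (G s), p⟫_ℝ - bregmanDiv h p (πk s))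
      K (πk1 s) := by
    simpa only [EuclideanSpace.sum_mul_eq_inner_toLp] using hmax s
  have hnonneg : ∀ p q, 0 ≤ bregmanDiv h p q := fun p q =>
    bregmanDiv_nonneg hconv.convexOn (Set.mem_univ p) (Set.mem_univ q) (hdiff q)
  refine ⟨?_, ?_⟩
  · exact (EuclideanSpace.sum_mul_eq_inner_toLp _ (πk s - πk1 s)).trans_le
      (inner_sub_le_of_isMaxOn_sub_bregmanDiv hK hη (hπk s) (hπk1 s) (hdiff _) hstep)
  · exact mul_nonpos_of_nonpos_of_nonneg (neg_nonpos.2 (by positivity))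
      (add_nonneg (hnonneg _ _) (hnonneg _ _))

/-- Monotone policy improvement implies nonnegative weighted advantage: the mirror
ascent update satisfies
`∑ₐ G(s,a)(π_k(a|s) − π_{k+1}(a|s)) ≤ −(1/η)[D(π_{k+1},π_k) + D(π_k,π_{k+1})] ≤ 0`. -/
theorem mirror_ascent_improvement {S A : Type*} [Fintype S] [Fintype A]
    (h : EuclideanSpace ℝ A → ℝ)
    (hconv : StrictConvexOn ℝ Set.univ h)
    (hdiff : Differentiable ℝ h)
    (D : EuclideanSpace ℝ A → EuclideanSpace ℝ A → ℝ)
    (hD : ∀ p q, D p q = h p - h q - (inner ℝ (gradient h q) (p - q) : ℝ))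
    (K : Set (EuclideanSpace ℝ A)) (hK : Convex ℝ K) (hKclosed : IsClosed K)
    (hKsimplex : ∀ p ∈ K, (∀ a, 0 ≤ p a) ∧ ∑ a, p a = 1)
    (G : S → A → ℝ) (η : ℝ) (hη : 0 < η)
    (πk πk1 : S → EuclideanSpace ℝ A)
    (hπk : ∀ s, πk s ∈ K) (hπk1 : ∀ s, πk1 s ∈ K)
    (hmax : ∀ s, IsMaxOn (fun p => η * ∑ a, G s a * p a - D p (πk s)) K (πk1 s)) :
    ∀ s, ∑ a, G s a * (πk s a - πk1 s a) ≤
          -(1 / η) * (D (πk1 s) (πk s) + D (πk s) (πk1 s)) ∧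
        -(1 / η) * (D (πk1 s) (πk s) + D (πk s) (πk1 s)) ≤ 0 :=
  mirror_ascent_improvement_general h hconv hdiff D hD K hK G η hη πk πk1 hπk hπk1 hmax
end
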